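/- arXiv:2308.08636 — 2 statements merged into one kernel-verified Lean document; each statement's English description precedes it below -/
import Mathlib

section
/- Existence of entropy and temperature (forward direction): Let Σ be a nonempty compact Hausdorff space and let 𝒫 ⊆ M°(Σ) × M(Σ) be such that the closure of Cone(𝒫) is convex and meets (0, M₊(Σ)) only in (0,0). Then there exist a continuous function η : Σ → ℝ and a continuous function T : Σ → ℝ with T > 0 everywhere, such that for every (Δm, q) ∈ 𝒫, ∫_Σ η d(Δm) ≥ ∫_Σ (1/T) dq. -/
/-!
Let `S` be the compact convex set of probability measures (positive functionals `φ` with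
`φ 1 = 1`). The Kelvin-Planck condition says that the compact convex set `{0} × S` misses
the closed convex cone `cl(Cone 𝒫)`, so Hahn-Banach gives a continuous functional `f` on
`M°(Σ) × M(Σ)`, negative on `{0} × S` and nonnegative on the cone. In the weak-star
topology, `f` is evaluation at a pair of continuous functions: `f (Δm, q) = Δm η + q g`.
Testing `f` on Dirac measures `(0, δ_σ)` shows `g < 0`, so `T := -1/g` is a temperature
and `η` an entropy.
-/

/-- The cone generated by a set `S`: all nonnegative real multiples of members of `S`. -/
def coneOf {V : Type*} [AddCommGroup V] [Module ℝ V] [TopologicalSpace V]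
    (S : Set V) : Set V :=
  {x | ∃ α : ℝ, 0 ≤ α ∧ ∃ s ∈ S, x = α • s}

open Set

section WeakDual

theorem WeakDual.exists_eq_apply {𝕜 F : Type*} [NontriviallyNormedField 𝕜] [AddCommGroup F]
    [TopologicalSpace F] [Module 𝕜 F] (f : WeakDual 𝕜 F →L[𝕜] 𝕜) :
    ∃ x : F, ∀ φ : WeakDual 𝕜 F, f φ = φ x := by
  obtain ⟨x, hx⟩ := LinearMap.dualEmbedding_surjective (topDualPairing 𝕜 F) f
  exact ⟨x, fun φ => by rw [← hx]; rfl⟩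

variable {E : Type*} [AddCommGroup E] [TopologicalSpace E] [Module ℝ E]

instance : LocallyConvexSpace ℝ (WeakDual ℝ E) := WeakBilin.locallyConvexSpace

theorem WeakDual.exists_eq_apply_fst_add_apply_snd
    (f : WeakDual ℝ E × WeakDual ℝ E →L[ℝ] ℝ) :
    ∃ x y : E, ∀ p : WeakDual ℝ E × WeakDual ℝ E, f p = p.1 x + p.2 y := by
  obtain ⟨x, hx⟩ := WeakDual.exists_eq_apply (f.comp (.inl ℝ _ _))
  obtain ⟨y, hy⟩ := WeakDual.exists_eq_apply (f.comp (.inr ℝ _ _))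
  refine ⟨x, y, fun p => ?_⟩
  rw [← hx, ← hy, ContinuousLinearMap.comp_apply, ContinuousLinearMap.comp_apply, ← map_add,
    ContinuousLinearMap.inl_apply, ContinuousLinearMap.inr_apply, Prod.mk_add_mk, add_zero,
    zero_add]

end WeakDual

section Cone

variable {V : Type*} [AddCommGroup V] [Module ℝ V] [TopologicalSpace V]

theorem smul_mem_coneOf {P : Set V} {p : V} (hp : p ∈ P) {α : ℝ} (hα : 0 ≤ α) :
    α • p ∈ coneOf P :=
  ⟨α, hα, p, hp, rfl⟩

theorem zero_mem_coneOf {P : Set V} (hP : P.Nonempty) : (0 : V) ∈ coneOf P := by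
  obtain ⟨p, hp⟩ := hP
  simpa using smul_mem_coneOf hp le_rfl

variable [IsTopologicalAddGroup V] [ContinuousSMul ℝ V] [LocallyConvexSpace ℝ V]

theorem exists_neg_on_nonneg_on_of_disjoint_closure_coneOf {P K : Set V} (hP : P.Nonempty)
    (hK : Convex ℝ K) (hKc : IsCompact K) (hconv : Convex ℝ (closure (coneOf P)))
    (hdisj : Disjoint K (closure (coneOf P))) :
    ∃ f : V →L[ℝ] ℝ, (∀ k ∈ K, f k < 0) ∧ ∀ p ∈ P, 0 ≤ f p := by
  obtain ⟨f, u, v, hfK, huv, hfC⟩ :=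
    geometric_hahn_banach_compact_closed hK hKc hconv isClosed_closure hdisj
  have hv : v < 0 := by simpa using hfC 0 (subset_closure (zero_mem_coneOf hP))
  refine ⟨f, fun k hk => (hfK k hk).trans (huv.trans hv), fun p hp => ?_⟩
  by_contra! hneg
  -- `f` is bounded below by `v` on the ray through `p`, which it sends to `-∞`.
  have hα : 0 ≤ (v - 1) / f p := (div_pos_of_neg_of_neg (by linarith) hneg).le
  have := hfC _ (subset_closure (smul_mem_coneOf hp hα))
  rw [map_smul, smul_eq_mul, div_mul_cancel₀ _ hneg.ne] at this
  linarith

end Cone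

section ProbabilityFunctionals

variable {X : Type*} [TopologicalSpace X]

variable (X) in
def probabilityFunctionals : Set (WeakDual ℝ C(X, ℝ)) :=
  {φ | (∀ g : C(X, ℝ), (∀ s, 0 ≤ g s) → 0 ≤ φ g) ∧ φ 1 = 1}

theorem evalCLM_mem_probabilityFunctionals (σ : X) :
    (ContinuousMap.evalCLM ℝ σ : WeakDual ℝ C(X, ℝ)) ∈ probabilityFunctionals X :=
  ⟨fun _ hg => hg σ, rfl⟩

theorem isClosed_probabilityFunctionals : IsClosed (probabilityFunctionals X) := by
  simp only [probabilityFunctionals, ofPred_and, ofPred_forall]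
  exact (isClosed_iInter fun g => isClosed_iInter fun _ =>
    isClosed_le continuous_const (WeakDual.eval_continuous g)).inter
    (isClosed_eq (WeakDual.eval_continuous 1) continuous_const)

theorem convex_probabilityFunctionals : Convex ℝ (probabilityFunctionals X) := by
  rintro φ ⟨hφ, hφ1⟩ ψ ⟨hψ, hψ1⟩ a b ha hb hab
  refine ⟨fun g hg => ?_, ?_⟩
  · have := hφ g hg
    have := hψ g hg
    change 0 ≤ a * φ g + b * ψ g
    positivity
  · change a * φ 1 + b * ψ 1 = 1
    rw [hφ1, hψ1, mul_one, mul_one, hab]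

variable [CompactSpace X]

theorem norm_apply_le_of_mem_probabilityFunctionals {φ : WeakDual ℝ C(X, ℝ)}
    (hφ : φ ∈ probabilityFunctionals X) (g : C(X, ℝ)) : ‖φ g‖ ≤ ‖g‖ := by
  have hg : ∀ s, |g s| ≤ ‖g‖ := fun s =>
    (Real.norm_eq_abs _).symm.le.trans (g.norm_coe_le_norm s)
  have hupper := hφ.1 (‖g‖ • 1 - g) fun s => by
    simp only [ContinuousMap.sub_apply, ContinuousMap.smul_apply, ContinuousMap.one_apply,
      smul_eq_mul, mul_one, sub_nonneg]
    exact (le_abs_self _).trans (hg s)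
  have hlower := hφ.1 (‖g‖ • 1 + g) fun s => by
    simp only [ContinuousMap.add_apply, ContinuousMap.smul_apply, ContinuousMap.one_apply,
      smul_eq_mul, mul_one]
    linarith [neg_abs_le (g s), hg s]
  rw [map_sub, map_smul, hφ.2, smul_eq_mul, mul_one] at hupper
  rw [map_add, map_smul, hφ.2, smul_eq_mul, mul_one] at hlower
  rw [Real.norm_eq_abs, abs_le]
  constructor <;> linarith

theorem isCompact_probabilityFunctionals : IsCompact (probabilityFunctionals X) := by
  have hpolar := WeakDual.isCompact_polar ℝ (Metric.closedBall_mem_nhds (0 : C(X, ℝ)) one_pos)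
  refine hpolar.of_isClosed_subset isClosed_probabilityFunctionals fun φ hφ g hg => ?_
  rw [Metric.mem_closedBall, dist_zero_right] at hg
  exact (norm_apply_le_of_mem_probabilityFunctionals hφ g).trans hg

end ProbabilityFunctionals

theorem disjoint_probabilityFunctionals_of_kelvinPlanck {X : Type*} [TopologicalSpace X]
    {C : Set (WeakDual ℝ C(X, ℝ) × WeakDual ℝ C(X, ℝ))}
    (hKP : ∀ x ∈ C, x.1 = 0 →
      (∀ φ : C(X, ℝ), (∀ s, 0 ≤ φ s) → 0 ≤ x.2 φ) → x = 0) :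
    Disjoint ({0} ×ˢ probabilityFunctionals X) C := by
  rw [Set.disjoint_left]
  rintro x ⟨hx1, hx2⟩ hxC
  rw [hKP x hxC hx1 hx2.1] at hx2
  exact zero_ne_one (α := ℝ) hx2.2

theorem existence_of_entropy_and_temperature_general {X : Type*} [TopologicalSpace X]
    [CompactSpace X]
    (P : Set (WeakDual ℝ C(X, ℝ) × WeakDual ℝ C(X, ℝ)))
    (hconv : Convex ℝ (closure (coneOf P)))
    (hKP : ∀ x ∈ closure (coneOf P), x.1 = 0 →
      (∀ φ : C(X, ℝ), (∀ s, 0 ≤ φ s) → 0 ≤ x.2 φ) → x = 0) :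
    ∃ η T Tinv : C(X, ℝ), (∀ σ, 0 < T σ) ∧ (∀ σ, Tinv σ = (T σ)⁻¹) ∧
      ∀ p ∈ P, p.2 Tinv ≤ p.1 η := by
  rcases P.eq_empty_or_nonempty with rfl | hP
  · exact ⟨0, 1, 1, by simp, by simp, by simp⟩
  obtain ⟨f, hf_neg, hf_nonneg⟩ := exists_neg_on_nonneg_on_of_disjoint_closure_coneOf hP
    ((convex_singleton 0).prod convex_probabilityFunctionals)
    (isCompact_singleton.prod isCompact_probabilityFunctionals) hconv
    (disjoint_probabilityFunctionals_of_kelvinPlanck hKP)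
  obtain ⟨η, g, hf⟩ := WeakDual.exists_eq_apply_fst_add_apply_snd f
  have hg : ∀ σ, 0 < -g σ := fun σ => by
    have := hf_neg (0, _) ⟨rfl, evalCLM_mem_probabilityFunctionals σ⟩
    rw [hf] at this
    change (0 : ℝ) + g σ < 0 at this
    linarith
  refine ⟨η, ⟨fun σ => (-g σ)⁻¹, (-g).continuous.inv₀ fun σ => (hg σ).ne'⟩, -g,
    fun σ => inv_pos.2 (hg σ), fun σ => (inv_inv _).symm, fun p hp => ?_⟩
  have := hf_nonneg p hp
  rw [hf] at this
  rw [map_neg]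
  linarith

/-- Existence of entropy and thermodynamic temperature (forward direction of the
main theorem).  Measures on the compact Hausdorff state space `Σ` are represented,
via Riesz, as elements of the weak-star dual of `C(Σ,ℝ)`; a process is a pair
`(Δm, q)` with `Δm(Σ) = 0`.  If `cl(Cone(𝒫))` is convex and meets
`{0} × M₊(Σ)` only at `(0,0)` (the Kelvin-Planck condition), then there are
continuous functions `η : Σ → ℝ` and `T : Σ → ℝ`, with `T` strictly positive,
such that `∫ η d(Δm) ≥ ∫ (1/T) dq` for every process `(Δm, q) ∈ 𝒫`. -/
theorem existence_of_entropy_and_temperature {X : Type*} [TopologicalSpace X]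
    [CompactSpace X] [T2Space X] [Nonempty X]
    (P : Set (WeakDual ℝ C(X, ℝ) × WeakDual ℝ C(X, ℝ)))
    (hP0 : ∀ p ∈ P, p.1 (1 : C(X, ℝ)) = 0)
    (hconv : Convex ℝ (closure (coneOf P)))
    (hKP : ∀ x ∈ closure (coneOf P), x.1 = 0 →
      (∀ φ : C(X, ℝ), (∀ s, 0 ≤ φ s) → 0 ≤ x.2 φ) → x = 0) :
    ∃ η T Tinv : C(X, ℝ), (∀ σ, 0 < T σ) ∧ (∀ σ, Tinv σ = (T σ)⁻¹) ∧
      ∀ p ∈ P, p.2 Tinv ≤ p.1 η :=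
  existence_of_entropy_and_temperature_general P hconv hKP
end

section
/- Additivity of the closed cone generated by processes (Appendix Lemma): Let V be a real topological vector space, and let 𝒫 ⊆ V be a set with the property that every open neighborhood of any p ∈ 𝒫 contains some p* ∈ 𝒫 belonging to a distinguished subfamily 𝒫_ℚ such that n·p* ∈ 𝒫_ℚ for all positive integers n and p₁* + p₂* ∈ 𝒫 for all p₁*, p₂* ∈ 𝒫_ℚ. Then for any v₁, v₂ ∈ cl(Cone(𝒫)), the sum v₁ + v₂ belongs to cl(Cone(𝒫)). -/
/-!
Approximate `α • p₁ + β • p₂` by `(m₁ / n) • q₁ + (m₂ / n) • q₂` with `q₁, q₂ ∈ 𝒫_ℚ` and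
positive integers `m₁, m₂`: putting the two scalars over a common denominator `n` exhibits this
as `(1 / n) • (m₁ • q₁ + m₂ • q₂)`, a point of the cone because `mᵢ • qᵢ ∈ 𝒫_ℚ`
and so their sum lies in `𝒫`. Continuity of
`(a, b, u, w) ↦ a • u + b • w` then puts `Cone(𝒫) + Cone(𝒫)`, and by continuity of addition
also `cl(Cone(𝒫)) + cl(Cone(𝒫))`, inside `cl(Cone(𝒫))`.
-/

open Filter Topology

lemma tendsto_nat_floor_mul_add_one_div {x : ℝ} (hx : 0 ≤ x) :
    Tendsto (fun n : ℕ => ((⌊x * n⌋₊ + 1 : ℕ) : ℝ) / n) atTop (𝓝 x) := by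
  have hfloor : Tendsto (fun n : ℕ => (⌊x * n⌋₊ : ℝ) / n) atTop (𝓝 x) :=
    (tendsto_nat_floor_mul_div_atTop hx).comp tendsto_natCast_atTop_atTop
  simpa only [Nat.cast_add, Nat.cast_one, add_div, add_zero] using
    hfloor.add tendsto_one_div_atTop_nhds_zero_nat

lemma mem_closure_natCast_div_pairs {α β : ℝ} (hα : 0 ≤ α) (hβ : 0 ≤ β) :
    (α, β) ∈ closure
      {c : ℝ × ℝ | ∃ m₁ m₂ n : ℕ, 0 < m₁ ∧ 0 < m₂ ∧ c = ((m₁ : ℝ) / n, (m₂ : ℝ) / n)} :=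
  mem_closure_of_tendsto
    ((tendsto_nat_floor_mul_add_one_div hα).prodMk_nhds (tendsto_nat_floor_mul_add_one_div hβ))
    (Eventually.of_forall fun n => ⟨_, _, n, Nat.succ_pos _, Nat.succ_pos _, rfl⟩)

section

variable {V : Type*} [AddCommGroup V] [Module ℝ V] [TopologicalSpace V] {P PQ : Set V}

lemma natCast_div_smul_add_mem_coneOf
    (hnat : ∀ q ∈ PQ, ∀ n : ℕ, 0 < n → (n : ℝ) • q ∈ PQ)
    (hsum : ∀ q₁ ∈ PQ, ∀ q₂ ∈ PQ, q₁ + q₂ ∈ P)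
    {q₁ q₂ : V} (hq₁ : q₁ ∈ PQ) (hq₂ : q₂ ∈ PQ) {m₁ m₂ : ℕ} (hm₁ : 0 < m₁) (hm₂ : 0 < m₂)
    (n : ℕ) : ((m₁ : ℝ) / n) • q₁ + ((m₂ : ℝ) / n) • q₂ ∈ coneOf P := by
  refine ⟨1 / n, by positivity, _, hsum _ (hnat q₁ hq₁ m₁ hm₁) _ (hnat q₂ hq₂ m₂ hm₂), ?_⟩
  simp only [smul_add, smul_smul, one_div_mul_eq_div]

variable [ContinuousAdd V] [ContinuousSMul ℝ V]

lemma add_mem_closure_coneOf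
    (hdense : ∀ p ∈ P, ∀ O : Set V, IsOpen O → p ∈ O → ∃ q ∈ PQ, q ∈ O)
    (hnat : ∀ q ∈ PQ, ∀ n : ℕ, 0 < n → (n : ℝ) • q ∈ PQ)
    (hsum : ∀ q₁ ∈ PQ, ∀ q₂ ∈ PQ, q₁ + q₂ ∈ P)
    {x y : V} (hx : x ∈ coneOf P) (hy : y ∈ coneOf P) : x + y ∈ closure (coneOf P) := by
  obtain ⟨α, hα, p₁, hp₁, rfl⟩ := hx
  obtain ⟨β, hβ, p₂, hp₂, rfl⟩ := hy
  have hP : P ⊆ closure PQ := fun p hp => mem_closure_iff.2 fun O hO hpO =>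
    (hdense p hp O hO hpO).imp fun _ hq => ⟨hq.2, hq.1⟩
  refine map_mem_closure₂ (f := fun (c : ℝ × ℝ) (q : V × V) => c.1 • q.1 + c.2 • q.2)
    (x := (α, β)) (y := (p₁, p₂))
    (by fun_prop) (mem_closure_natCast_div_pairs hα hβ)
    (by rw [closure_prod_eq]; exact ⟨hP hp₁, hP hp₂⟩) ?_
  rintro _ ⟨m₁, m₂, n, hm₁, hm₂, rfl⟩ ⟨q₁, q₂⟩ ⟨hq₁, hq₂⟩
  exact natCast_div_smul_add_mem_coneOf hnat hsum hq₁ hq₂ hm₁ hm₂ n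

end

theorem closure_cone_processes_additive_general {V : Type*} [AddCommGroup V] [Module ℝ V]
    [TopologicalSpace V] [IsTopologicalAddGroup V] [ContinuousSMul ℝ V]
    {P PQ : Set V}
    (hdense : ∀ p ∈ P, ∀ O : Set V, IsOpen O → p ∈ O → ∃ q ∈ PQ, q ∈ O)
    (hnat : ∀ q ∈ PQ, ∀ n : ℕ, 0 < n → (n : ℝ) • q ∈ PQ)
    (hsum : ∀ q₁ ∈ PQ, ∀ q₂ ∈ PQ, q₁ + q₂ ∈ P) :
    ∀ v₁ ∈ closure (coneOf P), ∀ v₂ ∈ closure (coneOf P),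
      v₁ + v₂ ∈ closure (coneOf P) := by
  intro v₁ hv₁ v₂ hv₂
  simpa only [closure_closure] using
    map_mem_closure₂ continuous_add hv₁ hv₂ fun x hx y hy =>
      add_mem_closure_coneOf hdense hnat hsum hx hy

/-- Appendix Lemma: if each process `p ∈ 𝒫` can be approximated arbitrarily well by
members of a distinguished subfamily `𝒫_ℚ ⊆ 𝒫` that is closed under multiplication
by positive integers and whose pairwise sums lie in `𝒫`, then `cl(Cone(𝒫))` is
closed under addition. -/
theorem closure_cone_processes_additive {V : Type*} [AddCommGroup V] [Module ℝ V]
    [TopologicalSpace V] [IsTopologicalAddGroup V] [ContinuousSMul ℝ V]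
    {P PQ : Set V} (hPQsub : PQ ⊆ P)
    (hdense : ∀ p ∈ P, ∀ O : Set V, IsOpen O → p ∈ O → ∃ q ∈ PQ, q ∈ O)
    (hnat : ∀ q ∈ PQ, ∀ n : ℕ, 0 < n → (n : ℝ) • q ∈ PQ)
    (hsum : ∀ q₁ ∈ PQ, ∀ q₂ ∈ PQ, q₁ + q₂ ∈ P) :
    ∀ v₁ ∈ closure (coneOf P), ∀ v₂ ∈ closure (coneOf P),
      v₁ + v₂ ∈ closure (coneOf P) :=
  closure_cone_processes_additive_general hdense hnat hsum
end
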